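/- The strengthened test of Proposition 2 strictly refines the basic test: if B_z ≥ B_y componentwise but B_z^{sum} < B_y^{sum} + k, then y ↛ z (this outcome is certainly a negative). More generally, under the Bloom clock protocol any pair with y → z satisfies both B_z ≥ B_y and B_z^{sum} ≥ B_y^{sum} + k, so the refined test also has no false negatives. -/
import Mathlib

/-- The refined test of Proposition 2: if `B_z ≥ B_y` componentwise but
`B_z^{sum} < B_y^{sum} + k`, then `y ↛ z`; and any pair with `y → z`
satisfies both `B_z ≥ B_y` and `B_z^{sum} ≥ B_y^{sum} + k`, so the refined
test has no false negatives. -/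
theorem refined_test_no_false_negatives {E : Type*} {m k : ℕ}
    (B : E → Fin m → ℕ) (step : E → E → Prop)
    (hstep_le : ∀ e e', step e e' → ∀ i, B e i ≤ B e' i)
    (hstep_sum : ∀ e e', step e e' → (∑ i, B e i) + k ≤ ∑ i, B e' i) :
    (∀ y z : E, (∀ i, B y i ≤ B z i) → (∑ i, B z i) < (∑ i, B y i) + k →
      ¬ Relation.TransGen step y z) ∧
    (∀ y z : E, Relation.TransGen step y z →
      (∀ i, B y i ≤ B z i) ∧ (∑ i, B y i) + k ≤ ∑ i, B z i) := by
  have main : ∀ y z : E, Relation.TransGen step y z →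
      (∀ i, B y i ≤ B z i) ∧ (∑ i, B y i) + k ≤ ∑ i, B z i := by
    intro y z h
    induction h with
    | single h => exact ⟨hstep_le _ _ h, hstep_sum _ _ h⟩
    | tail _ h ih =>
        exact ⟨fun i => (ih.1 i).trans (hstep_le _ _ h i),
          ih.2.trans (le_trans (Nat.le_add_right _ _) (hstep_sum _ _ h))⟩
  exact ⟨fun y z _ hlt h => absurd (main y z h).2 (by omega), main⟩
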